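/- Let q be a nonzero complex number and let A_q be the quantum plane with parameter q over ℂ, with X, Y the images of the two generators. Then the family of monomials (i, j) ↦ Y^i · X^j, indexed by pairs of natural numbers (i, j), is a basis of A_q as a ℂ-vector space. In particular, for every natural number r, the r-th homogeneous component of A_q (the image in A_q of the span of all products of exactly r generators of the free algebra) has ℂ-dimension r + 1, so A_q has polynomial growth. -/

import Mathlib

open FreeAlgebra

/-- The free associative ℂ-algebra on two generators. -/
abbrev FreeTwo : Type := FreeAlgebra ℂ (Fin 2)

/-- The ℂ-span of the generators of the free algebra; its `r`-th power is the
span of all products of exactly `r` generators. -/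
noncomputable def gens : Submodule ℂ FreeTwo :=
  Submodule.span ℂ (Set.range (ι ℂ : Fin 2 → FreeTwo))

/-- The defining relation of the quantum plane with parameter `q`:
`x * y = q • (y * x)`. -/
def quantumRel (q : ℂ) : FreeTwo → FreeTwo → Prop :=
  fun a b => a = ι ℂ 0 * ι ℂ 1 ∧ b = q • (ι ℂ 1 * ι ℂ 0)

/-- The quantum plane `ℂ⟨x,y⟩/(xy - q·yx)`. -/
abbrev QuantumPlane (q : ℂ) : Type := RingQuot (quantumRel q)

/-- The image `X` of the generator `x` in the quantum plane. -/
noncomputable def QX (q : ℂ) : QuantumPlane q :=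
  RingQuot.mkAlgHom ℂ (quantumRel q) (ι ℂ 0)

/-- The image `Y` of the generator `y` in the quantum plane. -/
noncomputable def QY (q : ℂ) : QuantumPlane q :=
  RingQuot.mkAlgHom ℂ (quantumRel q) (ι ℂ 1)

/-!
From `X * Y = q • (Y * X)` one gets `X^j * Y^k = q^(j k) • (Y^k * X^j)`, so the span of the
monomials `Y^i * X^j` is closed under multiplication; it contains `1`, `X` and `Y`, hence is the
whole algebra. For independence, let `X` and `Y` act on `(ℕ × ℕ) →₀ ℂ` by
`e (i, j) ↦ q^i e (i, j+1)` and `e (i, j) ↦ e (i+1, j)`, which is how left multiplication acts on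
the expected basis: these operators satisfy the defining relation, and `Y^i * X^j` sends `e (0, 0)`
to `e (i, j)`. The image of the degree-`r` part of the free algebra is spanned by the `r + 1`
monomials with `i + j = r`.
-/

section QCommute

variable {R A : Type*} [CommSemiring R] [Semiring A] [Algebra R A] {q : R} {a b : A}

theorem mul_pow_eq_smul_pow_mul_of_mul_eq_smul (h : a * b = q • (b * a)) (k : ℕ) :
    a * b ^ k = q ^ k • (b ^ k * a) := by
  induction k with
  | zero => simp
  | succ k ih =>
    calc a * b ^ (k + 1) = (a * b ^ k) * b := by rw [pow_succ, mul_assoc]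
      _ = q ^ k • (b ^ k * (a * b)) := by rw [ih, smul_mul_assoc, mul_assoc]
      _ = q ^ (k + 1) • (b ^ (k + 1) * a) := by
        rw [h, mul_smul_comm, smul_smul, ← pow_succ, ← mul_assoc, ← pow_succ]

theorem pow_mul_pow_eq_smul_pow_mul_pow_of_mul_eq_smul (h : a * b = q • (b * a)) (j k : ℕ) :
    a ^ j * b ^ k = q ^ (j * k) • (b ^ k * a ^ j) := by
  induction j with
  | zero => simp
  | succ j ih =>
    calc a ^ (j + 1) * b ^ k = a ^ j * (a * b ^ k) := by rw [pow_succ, mul_assoc]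
      _ = q ^ k • ((a ^ j * b ^ k) * a) := by
        rw [mul_pow_eq_smul_pow_mul_of_mul_eq_smul h, mul_smul_comm, mul_assoc]
      _ = q ^ ((j + 1) * k) • (b ^ k * a ^ (j + 1)) := by
        rw [ih, smul_mul_assoc, smul_smul, ← pow_add, mul_assoc, ← pow_succ]
        ring_nf

end QCommute

namespace QuantumPlane

open Finset

variable (q : ℂ)

theorem QX_mul_QY : QX q * QY q = q • (QY q * QX q) := by
  simpa only [QX, QY, map_mul, map_smul] using
    RingQuot.mkAlgHom_rel ℂ (s := quantumRel q) (x := ι ℂ 0 * ι ℂ 1) ⟨rfl, rfl⟩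

noncomputable def monomial (p : ℕ × ℕ) : QuantumPlane q := QY q ^ p.1 * QX q ^ p.2

theorem monomial_mul_monomial (p p' : ℕ × ℕ) :
    monomial q p * monomial q p' = q ^ (p.2 * p'.1) • monomial q (p + p') := by
  simp only [monomial, Prod.fst_add, Prod.snd_add, pow_add]
  rw [mul_assoc, ← mul_assoc (QX q ^ p.2),
    pow_mul_pow_eq_smul_pow_mul_pow_of_mul_eq_smul (QX_mul_QY q)]
  simp only [smul_mul_assoc, mul_smul_comm, mul_assoc]

theorem monomial_zero : monomial q 0 = 1 := by simp [monomial]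

theorem monomial_zero_one : monomial q (0, 1) = QX q := by simp [monomial]

theorem monomial_one_zero : monomial q (1, 0) = QY q := by simp [monomial]

theorem QX_mul_monomial (p : ℕ × ℕ) :
    QX q * monomial q p = q ^ p.1 • monomial q (p.1, p.2 + 1) := by
  rw [← monomial_zero_one, monomial_mul_monomial, one_mul, Prod.mk_add_mk, zero_add, add_comm]

theorem QY_mul_monomial (p : ℕ × ℕ) : QY q * monomial q p = monomial q (p.1 + 1, p.2) := by
  rw [← monomial_one_zero, monomial_mul_monomial, zero_mul, pow_zero, one_smul, Prod.mk_add_mk,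
    add_comm, zero_add]

noncomputable def shiftX : Module.End ℂ ((ℕ × ℕ) →₀ ℂ) :=
  Finsupp.lsum ℂ fun p => q ^ p.1 • Finsupp.lsingle (p.1, p.2 + 1)

noncomputable def shiftY : Module.End ℂ ((ℕ × ℕ) →₀ ℂ) :=
  Finsupp.lmapDomain ℂ ℂ fun p => (p.1 + 1, p.2)

theorem shiftX_single (p : ℕ × ℕ) (c : ℂ) :
    shiftX q (Finsupp.single p c) = q ^ p.1 • Finsupp.single (p.1, p.2 + 1) c := by
  simp [shiftX]

theorem shiftY_single (p : ℕ × ℕ) (c : ℂ) :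
    shiftY (Finsupp.single p c) = Finsupp.single (p.1 + 1, p.2) c := by
  simp [shiftY, Finsupp.mapDomain_single]

theorem shiftX_mul_shiftY : shiftX q * shiftY = q • (shiftY * shiftX q) := by
  refine Finsupp.lhom_ext fun p c => ?_
  simp only [Module.End.mul_apply, LinearMap.smul_apply, shiftX_single, shiftY_single, map_smul,
    smul_smul, ← pow_succ']

theorem shiftX_pow_single_zero (j b : ℕ) (c : ℂ) :
    (shiftX q ^ j) (Finsupp.single (0, b) c) = Finsupp.single (0, b + j) c := by
  induction j with
  | zero => simp
  | succ j ih =>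
    rw [pow_succ', Module.End.mul_apply, ih, shiftX_single, pow_zero, one_smul, add_assoc]

theorem shiftY_pow_single (i : ℕ) (p : ℕ × ℕ) (c : ℂ) :
    (shiftY ^ i) (Finsupp.single p c) = Finsupp.single (p.1 + i, p.2) c := by
  induction i with
  | zero => simp
  | succ i ih => rw [pow_succ', Module.End.mul_apply, ih, shiftY_single, add_assoc]

noncomputable def toEnd : QuantumPlane q →ₐ[ℂ] Module.End ℂ ((ℕ × ℕ) →₀ ℂ) :=
  RingQuot.liftAlgHom ℂ ⟨FreeAlgebra.lift ℂ ![shiftX q, shiftY], by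
    rintro _ _ ⟨rfl, rfl⟩
    simpa using shiftX_mul_shiftY q⟩

theorem toEnd_QX : toEnd q (QX q) = shiftX q := by
  simp [toEnd, QX]

theorem toEnd_QY : toEnd q (QY q) = shiftY := by
  simp [toEnd, QY]

theorem toEnd_monomial_single_zero (p : ℕ × ℕ) :
    toEnd q (monomial q p) (Finsupp.single 0 1) = Finsupp.single p 1 := by
  rw [monomial, map_mul, map_pow, map_pow, toEnd_QX, toEnd_QY, Module.End.mul_apply,
    Prod.zero_eq_mk, shiftX_pow_single_zero, shiftY_pow_single, zero_add, zero_add]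

theorem linearIndependent_monomial : LinearIndependent ℂ (monomial q) := by
  refine .of_comp ((LinearMap.applyₗ (Finsupp.single 0 1)).comp (toEnd q).toLinearMap) ?_
  convert Finsupp.linearIndependent_single_one ℂ (ℕ × ℕ) with p
  exact toEnd_monomial_single_zero q p

theorem span_range_monomial : Submodule.span ℂ (Set.range (monomial q)) = ⊤ := by
  set S := Submodule.span ℂ (Set.range (monomial q))
  have mem_S (p : ℕ × ℕ) : monomial q p ∈ S := Submodule.subset_span ⟨p, rfl⟩
  have mul_mem_S (a b : QuantumPlane q) (ha : a ∈ S) (hb : b ∈ S) : a * b ∈ S := by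
    refine Submodule.mul_le.mp ?_ a ha b hb
    rw [Submodule.span_mul_span, Submodule.span_le]
    rintro _ ⟨_, ⟨p, rfl⟩, _, ⟨p', rfl⟩, rfl⟩
    simpa only [monomial_mul_monomial, SetLike.mem_coe] using S.smul_mem _ (mem_S _)
  let T := S.toSubalgebra (monomial_zero q ▸ mem_S 0) mul_mem_S
  have hT :
      Algebra.adjoin ℂ (Set.range (ι ℂ)) ≤ T.comap (RingQuot.mkAlgHom ℂ (quantumRel q)) := by
    refine Algebra.adjoin_le ?_
    rintro _ ⟨i, rfl⟩
    fin_cases i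
    · exact (monomial_zero_one q ▸ mem_S (0, 1) : QX q ∈ S)
    · exact (monomial_one_zero q ▸ mem_S (1, 0) : QY q ∈ S)
  rw [FreeAlgebra.adjoin_range_ι, top_le_iff] at hT
  rw [eq_top_iff]
  rintro a -
  obtain ⟨b, rfl⟩ := RingQuot.mkAlgHom_surjective ℂ (quantumRel q) a
  exact (Subalgebra.mem_comap ..).mp (hT ▸ Algebra.mem_top : b ∈ _)

noncomputable def monomialBasis : Module.Basis (ℕ × ℕ) ℂ (QuantumPlane q) :=
  .mk (linearIndependent_monomial q) (span_range_monomial q).ge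

theorem monomialBasis_apply (p : ℕ × ℕ) : monomialBasis q p = monomial q p :=
  Module.Basis.mk_apply ..

theorem map_gens : gens.map (RingQuot.mkAlgHom ℂ (quantumRel q)).toLinearMap =
    Submodule.span ℂ {QX q, QY q} := by
  rw [gens, Submodule.map_span, ← Set.range_comp]
  congr 1
  ext a
  simp [Fin.exists_fin_two, QX, QY, eq_comm]

theorem span_pair_mul_span_monomial_antidiagonal (r : ℕ) :
    Submodule.span ℂ {QX q, QY q} *
        Submodule.span ℂ (monomial q '' ↑(antidiagonal r)) =
      Submodule.span ℂ (monomial q '' ↑(antidiagonal (r + 1))) := by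
  rw [Submodule.span_mul_span]
  apply le_antisymm <;> rw [Submodule.span_le]
  · rintro _ ⟨_, hxy, _, ⟨⟨i, j⟩, hij, rfl⟩, rfl⟩
    simp only [mem_coe, HasAntidiagonal.mem_antidiagonal] at hij
    dsimp only
    rcases hxy with rfl | rfl
    · rw [QX_mul_monomial]
      exact Submodule.smul_mem _ _ (Submodule.subset_span ⟨_, by simp; omega, rfl⟩)
    · rw [QY_mul_monomial]
      exact Submodule.subset_span ⟨_, by simp; omega, rfl⟩
  · rintro _ ⟨⟨i, j⟩, hij, rfl⟩
    simp only [mem_coe, HasAntidiagonal.mem_antidiagonal] at hij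
    refine Submodule.subset_span ?_
    cases i with
    | zero =>
      obtain rfl : j = r + 1 := by simpa using hij
      have h := QX_mul_monomial q (0, r)
      rw [pow_zero, one_smul] at h
      exact h ▸ Set.mul_mem_mul (by simp) ⟨(0, r), by simp, rfl⟩
    | succ i =>
      exact QY_mul_monomial q (i, j) ▸
        Set.mul_mem_mul (by simp) ⟨(i, j), by simp; omega, rfl⟩

theorem map_gens_pow (r : ℕ) :
    (gens ^ r).map (RingQuot.mkAlgHom ℂ (quantumRel q)).toLinearMap =
      Submodule.span ℂ (monomial q '' ↑(antidiagonal r)) := by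
  induction r with
  | zero =>
    rw [pow_zero, Submodule.map_one, Submodule.one_eq_span, Nat.antidiagonal_zero, coe_singleton,
      Set.image_singleton, ← Prod.zero_eq_mk, monomial_zero]
  | succ r ih =>
    rw [pow_succ', Submodule.map_mul, map_gens, ih, span_pair_mul_span_monomial_antidiagonal]

theorem finrank_span_monomial_antidiagonal (r : ℕ) :
    Module.finrank ℂ (Submodule.span ℂ (monomial q '' ↑(antidiagonal r))) = r + 1 := by
  rw [Set.image_eq_range]
  exact (finrank_span_eq_card ((linearIndependent_monomial q).comp _ Subtype.val_injective)).trans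
    (by simp)

end QuantumPlane

theorem quantumPlane_basis_and_polynomial_growth_general (q : ℂ) :
    (∃ b : Module.Basis (ℕ × ℕ) ℂ (QuantumPlane q),
      ∀ i j : ℕ, b (i, j) = QY q ^ i * QX q ^ j) ∧
    ∀ r : ℕ,
      Module.finrank ℂ
        (Submodule.map (RingQuot.mkAlgHom ℂ (quantumRel q)).toLinearMap
          (gens ^ r)) = r + 1 := by
  refine ⟨⟨QuantumPlane.monomialBasis q, fun i j => QuantumPlane.monomialBasis_apply q (i, j)⟩,
    fun r => ?_⟩
  rw [QuantumPlane.map_gens_pow, QuantumPlane.finrank_span_monomial_antidiagonal]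

/-- The monomials `Y^i * X^j` form a ℂ-basis of the quantum plane with nonzero
parameter `q`, and the image in the quantum plane of the degree-`r` homogeneous
component of the free algebra has dimension `r + 1`: the quantum plane has
polynomial growth. -/
theorem quantumPlane_basis_and_polynomial_growth (q : ℂ) (hq : q ≠ 0) :
    (∃ b : Module.Basis (ℕ × ℕ) ℂ (QuantumPlane q),
      ∀ i j : ℕ, b (i, j) = QY q ^ i * QX q ^ j) ∧
    ∀ r : ℕ,
      Module.finrank ℂ
        (Submodule.map (RingQuot.mkAlgHom ℂ (quantumRel q)).toLinearMap
          (gens ^ r)) = r + 1 :=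
  quantumPlane_basis_and_polynomial_growth_general q
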